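/- arXiv:1412.0391 — 4 statements merged into one kernel-verified Lean document; each statement's English description precedes it below -/
import Mathlib

section
/- Let α > 1, M ≥ 1, Cψ > 0 and let ψ̂ : ℝ → ℂ be measurable with |ψ̂(λ)| ≤ Cψ · min(|λ|^M, (1+|λ|)^(−α)) for all λ ∈ ℝ. Let β ∈ (0,2], c ∈ ℝ and δ ∈ ℝ with 1 + β − 2α < δ ≤ 2M. Then there exists a constant C > 0, depending only on α, β, M, Cψ, δ and c, such that for every L > 0, every measurable F : (−π,π) → ℝ satisfying |F(λ) − 1| ≤ L·|λ|^β for all λ ∈ (−π,π), and every integer j ≥ 0, one has | 2^j · ∫_{−π}^{π} |λ|^(−δ) cos(cλ) F(λ) |ψ̂(2^j λ)|² dλ − 2^{jδ} K(δ) | ≤ C (1+L) 2^{j(δ−β)}. -/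
open MeasureTheory Filter Set intervalIntegral

private lemma absII {r : ℝ} (hr : -1 < r) :
    ∀ b : ℝ, IntervalIntegrable (fun x : ℝ => |x| ^ r) volume 0 b := by
  have key : ∀ b : ℝ, 0 ≤ b → IntervalIntegrable (fun x : ℝ => |x| ^ r) volume 0 b := by
    intro b hb
    rw [intervalIntegrable_iff, uIoc_of_le hb]
    have h0 : IntegrableOn (fun x : ℝ => x ^ r) (Ioc (0:ℝ) b) := by
      have := intervalIntegrable_rpow' (a := 0) (b := b) hr
      rwa [intervalIntegrable_iff, uIoc_of_le hb] at this
    exact h0.congr_fun (fun x hx => by rw [abs_of_pos hx.1]) measurableSet_Ioc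
  intro b
  rcases le_total 0 b with hb | hb
  · exact key b hb
  · rw [IntervalIntegrable.iff_comp_neg]
    simp only [abs_neg, neg_zero]
    exact key (-b) (by linarith)

private lemma absII2 {r : ℝ} (hr : -1 < r) (u v : ℝ) :
    IntervalIntegrable (fun x : ℝ => |x| ^ r) volume u v :=
  ((absII hr u).symm).trans (absII hr v)

private lemma aux_min_integrable {p a b : ℝ} (h1 : -1 < p + b) (h2 : p - a < -1)
    (ha : 0 ≤ a) :
    Integrable (fun x : ℝ => |x| ^ p * min (|x| ^ b) ((1 + |x|) ^ (-a))) := by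
  set f : ℝ → ℝ := fun x => |x| ^ p * min (|x| ^ b) ((1 + |x|) ^ (-a)) with hf
  have hmeas : Measurable f := by fun_prop
  have hnn : ∀ x, 0 ≤ f x := fun x =>
    mul_nonneg (Real.rpow_nonneg (abs_nonneg x) _)
      (le_min (Real.rpow_nonneg (abs_nonneg x) _) (Real.rpow_nonneg (by positivity) _))
  have hIci : IntegrableOn f (Ici (1:ℝ)) := by
    have hIoi : IntegrableOn f (Ioi (1:ℝ)) := by
      refine Integrable.mono' (integrableOn_Ioi_rpow_of_lt h2 one_pos)
        hmeas.aestronglyMeasurable ?_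
      filter_upwards [ae_restrict_mem measurableSet_Ioi] with x hx
      have hx1 : (1:ℝ) < x := hx
      have hx0 : (0:ℝ) < x := by linarith
      rw [Real.norm_eq_abs, abs_of_nonneg (hnn x)]
      calc f x ≤ |x| ^ p * (1 + |x|) ^ (-a) :=
            mul_le_mul_of_nonneg_left (min_le_right _ _) (Real.rpow_nonneg (abs_nonneg x) _)
        _ ≤ x ^ p * x ^ (-a) := by
            rw [abs_of_pos hx0]
            exact mul_le_mul_of_nonneg_left
              (Real.rpow_le_rpow_of_nonpos hx0 (by linarith) (by linarith))
              (Real.rpow_nonneg hx0.le _)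
        _ = x ^ (p - a) := by rw [← Real.rpow_add hx0, sub_eq_add_neg]
    exact hIoi.congr_set_ae Ioi_ae_eq_Ici.symm
  have hIic : IntegrableOn f (Iic (-1:ℝ)) := by
    rw [← (Measure.measurePreserving_neg (volume : Measure ℝ)).integrableOn_comp_preimage
        (Homeomorph.neg ℝ).measurableEmbedding]
    have heq : (fun x : ℝ => f (-x)) = f := by
      funext x; simp only [hf, abs_neg]
    have hpre : (Neg.neg ⁻¹' (Iic (-1:ℝ)) : Set ℝ) = Ici 1 := by
      ext x; simp
    simp only [Function.comp_def, heq, hpre]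
    exact hIci
  have hmid : IntegrableOn f (Ioo (-1:ℝ) 1) := by
    have hg2 : IntegrableOn (fun x : ℝ => |x| ^ (p + b)) (Ioo (-1:ℝ) 1) := by
      have := absII2 h1 (-1:ℝ) 1
      rwa [intervalIntegrable_iff_integrableOn_Ioo_of_le (by norm_num)] at this
    refine Integrable.mono' hg2 hmeas.aestronglyMeasurable ?_
    have h0 : ∀ᵐ x : ℝ, x ≠ (0:ℝ) := by
      rw [ae_iff]
      simpa using measure_singleton (0 : ℝ)
    filter_upwards [ae_restrict_mem measurableSet_Ioo, ae_restrict_of_ae h0] with x _ hx0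
    rw [Real.norm_eq_abs, abs_of_nonneg (hnn x)]
    calc f x ≤ |x| ^ p * |x| ^ b :=
          mul_le_mul_of_nonneg_left (min_le_left _ _) (Real.rpow_nonneg (abs_nonneg x) _)
      _ = |x| ^ (p + b) := (Real.rpow_add (abs_pos.2 hx0) _ _).symm
  rw [← integrableOn_univ]
  have hcover : (Iic (-1:ℝ) ∪ Ioo (-1:ℝ) 1) ∪ Ici (1:ℝ) = univ := by
    rw [Iic_union_Ioo_eq_Iio (by norm_num), Iio_union_Ici]
  rw [← hcover]
  exact (hIic.union hmid).union hIci

set_option maxHeartbeats 1000000 in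
/-- first-order wavelet-covariance approximation. -/
theorem stmt_0 (α M Cψ : ℝ) (hα : 1 < α) (hM : 1 ≤ M) (hCψ : 0 < Cψ)
    (ψ : ℝ → ℂ) (hψmeas : Measurable ψ)
    (hψ : ∀ l : ℝ, ‖ψ l‖ ≤ Cψ * min (|l| ^ M) ((1 + |l|) ^ (-α)))
    (β : ℝ) (hβ : β ∈ Set.Ioc (0:ℝ) 2) (c δ : ℝ)
    (hδ1 : 1 + β - 2 * α < δ) (hδ2 : δ ≤ 2 * M) :
    ∃ C > 0, ∀ L > 0, ∀ F : ℝ → ℝ, Measurable F →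
      (∀ l ∈ Set.Ioo (-Real.pi) Real.pi, |F l - 1| ≤ L * |l| ^ β) →
      ∀ j : ℕ,
        |(2:ℝ) ^ j * (∫ l in (-Real.pi)..Real.pi,
              |l| ^ (-δ) * Real.cos (c * l) * F l * ‖ψ ((2:ℝ) ^ j * l)‖ ^ 2)
          - (2:ℝ) ^ ((j:ℝ) * δ) * (∫ l : ℝ, |l| ^ (-δ) * ‖ψ l‖ ^ 2)|
        ≤ C * (1 + L) * (2:ℝ) ^ ((j:ℝ) * (δ - β)) := by
  obtain ⟨hβ0, hβ2⟩ := hβ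
  have hπ1 : (1:ℝ) ≤ Real.pi := by linarith [Real.pi_gt_three]
  have hπ0 : (0:ℝ) < Real.pi := by linarith
  have habsmeas : Measurable fun μ : ℝ => ‖ψ μ‖ := by
    exact hψmeas.norm
  set m2 : ℝ → ℝ := fun μ => min (|μ| ^ (2*M)) ((1 + |μ|) ^ (-(2*α))) with hm2
  have hm2nn : ∀ μ, 0 ≤ m2 μ := fun μ =>
    le_min (Real.rpow_nonneg (abs_nonneg μ) _) (Real.rpow_nonneg (by positivity) _)
  have habs2 : ∀ μ : ℝ, ‖ψ μ‖ ^ 2 ≤ Cψ ^ 2 * m2 μ := by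
    intro μ
    have h0 : (0:ℝ) ≤ ‖ψ μ‖ := norm_nonneg _
    have hmn : (0:ℝ) ≤ min (|μ| ^ M) ((1 + |μ|) ^ (-α)) :=
      le_min (Real.rpow_nonneg (abs_nonneg μ) _) (Real.rpow_nonneg (by positivity) _)
    have h1 : ‖ψ μ‖ ^ 2 ≤ (Cψ * min (|μ| ^ M) ((1 + |μ|) ^ (-α))) ^ 2 :=
      pow_le_pow_left₀ h0 (hψ μ) 2
    have e1 : (|μ| ^ M) ^ 2 = |μ| ^ (2*M) := by
      rw [← Real.rpow_natCast (|μ| ^ M) 2, ← Real.rpow_mul (abs_nonneg μ)]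
      norm_num [mul_comm]
    have e2 : ((1 + |μ|) ^ (-α)) ^ 2 = (1 + |μ|) ^ (-(2*α)) := by
      rw [← Real.rpow_natCast ((1 + |μ|) ^ (-α)) 2, ← Real.rpow_mul (by positivity : (0:ℝ) ≤ 1 + |μ|)]
      ring_nf
    have h2 : (min (|μ| ^ M) ((1 + |μ|) ^ (-α))) ^ 2 ≤ m2 μ := by
      refine le_min ?_ ?_
      · rw [← e1]; exact pow_le_pow_left₀ hmn (min_le_left _ _) 2
      · rw [← e2]; exact pow_le_pow_left₀ hmn (min_le_right _ _) 2
    calc ‖ψ μ‖ ^ 2 ≤ (Cψ * min (|μ| ^ M) ((1 + |μ|) ^ (-α))) ^ 2 := h1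
      _ = Cψ ^ 2 * (min (|μ| ^ M) ((1 + |μ|) ^ (-α))) ^ 2 := by ring
      _ ≤ Cψ ^ 2 * m2 μ := by nlinarith [sq_nonneg Cψ]
  set W : ℝ → ℝ := fun μ => Cψ ^ 2 * (|μ| ^ (β - δ) * m2 μ) with hW
  have hWnn : ∀ μ, 0 ≤ W μ := fun μ =>
    mul_nonneg (by positivity) (mul_nonneg (Real.rpow_nonneg (abs_nonneg μ) _) (hm2nn μ))
  have hWint : Integrable W :=
    (aux_min_integrable (p := β - δ) (a := 2*α) (b := 2*M)
      (by linarith) (by linarith) (by linarith)).const_mul _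
  set g : ℝ → ℝ := fun μ => |μ| ^ (-δ) * ‖ψ μ‖ ^ 2 with hg
  have hgnn : ∀ μ, 0 ≤ g μ := fun μ =>
    mul_nonneg (Real.rpow_nonneg (abs_nonneg μ) _) (sq_nonneg _)
  have mrpow : ∀ q : ℝ, Measurable fun x : ℝ => |x| ^ q := fun q => by fun_prop
  have hgmeas : Measurable g := (mrpow (-δ)).mul (habsmeas.pow_const 2)
  have hGint : Integrable g := by
    refine Integrable.mono'
      ((aux_min_integrable (p := -δ) (a := 2*α) (b := 2*M)
        (by linarith) (by linarith) (by linarith)).const_mul (Cψ^2))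
      hgmeas.aestronglyMeasurable ?_
    filter_upwards with μ
    rw [Real.norm_eq_abs, abs_of_nonneg (hgnn μ)]
    calc g μ ≤ |μ| ^ (-δ) * (Cψ^2 * m2 μ) :=
          mul_le_mul_of_nonneg_left (habs2 μ) (Real.rpow_nonneg (abs_nonneg μ) _)
      _ = Cψ^2 * (|μ| ^ (-δ) * m2 μ) := by ring
  set D : ℝ := 1 + c^2 * Real.pi^2 with hD
  have hD1 : (1:ℝ) ≤ D := by nlinarith [sq_nonneg c, sq_nonneg Real.pi]
  set IW : ℝ := ∫ μ, W μ with hIW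
  have hIWnn : 0 ≤ IW := integral_nonneg hWnn
  refine ⟨D * (IW + 1), by nlinarith, ?_⟩
  intro L hL F hFmeas hF j
  set T : ℝ := (2:ℝ)^j with hTdef
  have hT0 : (0:ℝ) < T := by positivity
  have hT1 : (1:ℝ) ≤ T := one_le_pow₀ (by norm_num)
  have hTr : ∀ r : ℝ, T ^ r = (2:ℝ) ^ ((j:ℝ) * r) := by
    intro r
    rw [hTdef, ← Real.rpow_natCast 2 j, ← Real.rpow_mul (by norm_num : (0:ℝ) ≤ 2)]
  set h : ℝ → ℝ := fun μ =>
    |μ| ^ (-δ) * Real.cos (c * (T⁻¹ * μ)) * F (T⁻¹ * μ) * ‖ψ μ‖ ^ 2 with hh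
  have hhmeas : Measurable h := by
    refine ((((mrpow (-δ)).mul
      (((measurable_id.const_mul T⁻¹).const_mul c).cos)).mul
      (hFmeas.comp (measurable_id.const_mul T⁻¹))).mul (habsmeas.pow_const 2))
  have h1 : ∀ l : ℝ,
      |l| ^ (-δ) * Real.cos (c * l) * F l * ‖ψ (T * l)‖ ^ 2
        = T ^ δ * h (T * l) := by
    intro l
    have hTl : T⁻¹ * (T * l) = l := inv_mul_cancel_left₀ (ne_of_gt hT0) l
    simp only [hh, hTl]
    have e1 : |T * l| ^ (-δ) = T ^ (-δ) * |l| ^ (-δ) := by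
      rw [abs_mul, abs_of_pos hT0, Real.mul_rpow hT0.le (abs_nonneg l)]
    rw [e1]
    have e2 : T ^ δ * (T ^ (-δ) * |l| ^ (-δ) * Real.cos (c*l) * F l * ‖ψ (T*l)‖ ^ 2)
        = (T ^ δ * T ^ (-δ)) * (|l| ^ (-δ) * Real.cos (c*l) * F l * ‖ψ (T*l)‖ ^ 2) := by
      ring
    rw [e2, ← Real.rpow_add hT0]
    norm_num
  set S : ℝ := ∫ x in T * -Real.pi..T * Real.pi, h x with hS
  have hSle : T * -Real.pi ≤ T * Real.pi := by nlinarith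
  have hsub : T * (∫ l in (-Real.pi)..Real.pi,
      |l| ^ (-δ) * Real.cos (c * l) * F l * ‖ψ (T * l)‖ ^ 2)
      = (2:ℝ) ^ ((j:ℝ) * δ) * S := by
    rw [intervalIntegral.integral_congr (g := fun l => T ^ δ * h (T * l)) (fun l _ => h1 l),
      intervalIntegral.integral_const_mul, hS,
      ← intervalIntegral.smul_integral_comp_mul_left h T, smul_eq_mul, ← hTr δ]
    ring
  set ind : ℝ → ℝ := (Ioc (T * -Real.pi) (T * Real.pi)).indicator h with hind
  have hS2 : S = ∫ μ, ind μ := by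
    rw [hS, intervalIntegral.integral_of_le hSle, hind,
      MeasureTheory.integral_indicator measurableSet_Ioc]
  have hindint : Integrable ind := by
    rw [hind, integrable_indicator_iff measurableSet_Ioc]
    refine Integrable.mono' (hGint.const_mul (1 + L * Real.pi ^ β)).integrableOn
      hhmeas.aestronglyMeasurable ?_
    have hne : ∀ᵐ μ : ℝ, μ ≠ T * Real.pi := by
      rw [ae_iff]
      simpa using measure_singleton (T * Real.pi)
    filter_upwards [ae_restrict_mem measurableSet_Ioc, ae_restrict_of_ae hne] with μ hμ hμne
    have hμu : μ < T * Real.pi := lt_of_le_of_ne hμ.2 hμne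
    have hμl : T * -Real.pi < μ := hμ.1
    have hu : T⁻¹ * μ < Real.pi := by
      have := mul_lt_mul_of_pos_left hμu (inv_pos.2 hT0)
      rwa [inv_mul_cancel_left₀ (ne_of_gt hT0)] at this
    have hl : -Real.pi < T⁻¹ * μ := by
      have := mul_lt_mul_of_pos_left hμl (inv_pos.2 hT0)
      rwa [inv_mul_cancel_left₀ (ne_of_gt hT0)] at this
    have hlb2 : |T⁻¹ * μ| ^ β ≤ Real.pi ^ β :=
      Real.rpow_le_rpow (abs_nonneg _) (le_of_lt (abs_lt.2 ⟨hl, hu⟩)) hβ0.le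
    have hFb : |F (T⁻¹ * μ)| ≤ 1 + L * Real.pi ^ β := by
      have h2 := hF (T⁻¹ * μ) ⟨hl, hu⟩
      have h3 : |F (T⁻¹ * μ)| ≤ |F (T⁻¹ * μ) - 1| + 1 := by
        have := abs_add_le (F (T⁻¹ * μ) - 1) 1
        simpa using this
      have h4 : L * |T⁻¹ * μ| ^ β ≤ L * Real.pi ^ β :=
        mul_le_mul_of_nonneg_left hlb2 hL.le
      linarith
    rw [Real.norm_eq_abs, hh]
    have e3 : |(|μ| ^ (-δ) * Real.cos (c * (T⁻¹ * μ)) * F (T⁻¹ * μ) * ‖ψ μ‖ ^ 2)|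
        = |μ| ^ (-δ) * |Real.cos (c * (T⁻¹ * μ))| * |F (T⁻¹ * μ)| * ‖ψ μ‖ ^ 2 := by
      rw [abs_mul (|μ| ^ (-δ) * Real.cos (c * (T⁻¹ * μ)) * F (T⁻¹ * μ)) (‖ψ μ‖ ^ 2),
        abs_mul (|μ| ^ (-δ) * Real.cos (c * (T⁻¹ * μ))) (F (T⁻¹ * μ)),
        abs_mul (|μ| ^ (-δ)) (Real.cos (c * (T⁻¹ * μ))),
        abs_of_nonneg (Real.rpow_nonneg (abs_nonneg μ) (-δ)),
        abs_of_nonneg (sq_nonneg (‖ψ μ‖))]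
    rw [e3]
    have hrnn : (0:ℝ) ≤ |μ| ^ (-δ) := Real.rpow_nonneg (abs_nonneg μ) _
    have s1 : |μ| ^ (-δ) * |Real.cos (c * (T⁻¹ * μ))| ≤ |μ| ^ (-δ) * 1 :=
      mul_le_mul_of_nonneg_left (Real.abs_cos_le_one _) hrnn
    have s2 : |μ| ^ (-δ) * |Real.cos (c * (T⁻¹ * μ))| * |F (T⁻¹ * μ)|
        ≤ (|μ| ^ (-δ) * 1) * (1 + L * Real.pi ^ β) :=
      mul_le_mul s1 hFb (abs_nonneg _) (by positivity)
    calc |μ| ^ (-δ) * |Real.cos (c * (T⁻¹ * μ))| * |F (T⁻¹ * μ)| * ‖ψ μ‖ ^ 2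
        ≤ ((|μ| ^ (-δ) * 1) * (1 + L * Real.pi ^ β)) * ‖ψ μ‖ ^ 2 :=
          mul_le_mul_of_nonneg_right s2 (sq_nonneg _)
      _ = (1 + L * Real.pi ^ β) * g μ := by simp only [hg]; ring
  have hae : ∀ᵐ μ : ℝ, μ ≠ 0 ∧ μ ≠ T * Real.pi := by
    rw [ae_iff]
    refine measure_mono_null (t := ({(0:ℝ)} ∪ {T * Real.pi} : Set ℝ)) ?_
      (measure_union_null (measure_singleton _) (measure_singleton _))
    intro x hx
    simp only [Set.mem_setOf_eq, not_and_or, not_not] at hx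
    simp only [Set.union_singleton, Set.mem_insert_iff, Set.mem_singleton_iff]
    tauto
  have hkey : ∀ᵐ μ : ℝ, ‖ind μ - g μ‖ ≤ D * (1+L) * T ^ (-β) * W μ := by
    filter_upwards [hae] with μ hμ
    obtain ⟨hμ0, hμT⟩ := hμ
    by_cases hmem : μ ∈ Ioc (T * -Real.pi) (T * Real.pi)
    · rw [hind, Set.indicator_of_mem hmem]
      have hμu : μ < T * Real.pi := lt_of_le_of_ne hmem.2 hμT
      have hμl : T * -Real.pi < μ := hmem.1
      have hu : T⁻¹ * μ < Real.pi := by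
        have := mul_lt_mul_of_pos_left hμu (inv_pos.2 hT0)
        rwa [inv_mul_cancel_left₀ (ne_of_gt hT0)] at this
      have hl : -Real.pi < T⁻¹ * μ := by
        have := mul_lt_mul_of_pos_left hμl (inv_pos.2 hT0)
        rwa [inv_mul_cancel_left₀ (ne_of_gt hT0)] at this
      have hl0 : T⁻¹ * μ ≠ 0 := by
        simp [hμ0, ne_of_gt hT0]
      have habsl : (0:ℝ) < |T⁻¹ * μ| := abs_pos.2 hl0
      have hdiff : h μ - g μ
          = (|μ| ^ (-δ) * ‖ψ μ‖ ^ 2) * (Real.cos (c * (T⁻¹ * μ)) * F (T⁻¹ * μ) - 1) := by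
        simp only [hh, hg]; ring
      rw [Real.norm_eq_abs, hdiff, abs_mul,
        abs_of_nonneg (mul_nonneg (Real.rpow_nonneg (abs_nonneg μ) _) (sq_nonneg _))]
      have hlπ : |T⁻¹ * μ| ≤ Real.pi := (abs_lt.2 ⟨hl, hu⟩).le
      have hcosF : |Real.cos (c * (T⁻¹ * μ)) * F (T⁻¹ * μ) - 1|
          ≤ (1+L) * D * (T ^ (-β) * |μ| ^ β) := by
        set l := T⁻¹ * μ
        have hFl := hF l ⟨hl, hu⟩
        have step1 : |Real.cos (c*l) * F l - 1| ≤ |F l - 1| + |Real.cos (c*l) - 1| := by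
          have e : Real.cos (c*l) * F l - 1
              = Real.cos (c*l) * (F l - 1) + (Real.cos (c*l) - 1) := by ring
          rw [e]
          refine (abs_add_le _ _).trans ?_
          have : |Real.cos (c*l) * (F l - 1)| ≤ |F l - 1| := by
            rw [abs_mul]
            exact mul_le_of_le_one_left (abs_nonneg _) (Real.abs_cos_le_one _)
          linarith
        have hcos2 : |Real.cos (c*l) - 1| ≤ (c*l)^2 / 2 := by
          rw [abs_sub_comm, abs_of_nonneg (by linarith [Real.cos_le_one (c*l)])]
          linarith [Real.one_sub_sq_div_two_le_cos (x := c*l)]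
        have hlb : |l| ^ (2:ℝ) ≤ Real.pi^2 * |l| ^ β := by
          rw [show (2:ℝ) = β + (2 - β) by ring, Real.rpow_add habsl]
          have hb1 : |l| ^ (2-β) ≤ Real.pi ^ (2-β) :=
            Real.rpow_le_rpow (abs_nonneg l) hlπ (by linarith)
          have hb2 : Real.pi ^ (2-β) ≤ Real.pi ^ (2:ℝ) :=
            Real.rpow_le_rpow_of_exponent_le hπ1 (by linarith)
          have hb3 : Real.pi ^ (2:ℝ) = Real.pi^2 := by
            rw [← Real.rpow_natCast Real.pi 2]; norm_num
          calc |l| ^ β * |l| ^ (2-β) ≤ |l| ^ β * Real.pi^2 := by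
                refine mul_le_mul_of_nonneg_left (hb1.trans ?_) (Real.rpow_nonneg (abs_nonneg l) β)
                rw [← hb3]; exact hb2
            _ = Real.pi^2 * |l| ^ β := mul_comm _ _
        have hsq : (c*l)^2 / 2 ≤ c^2 * Real.pi^2 * |l| ^ β := by
          have e2' : |l| ^ (2:ℝ) = |l| ^ (2:ℕ) := by
            rw [← Real.rpow_natCast |l| 2]; norm_num
          have e : (c*l)^2 = c^2 * |l| ^ (2:ℝ) := by
            rw [e2', mul_pow, sq_abs]
          rw [e]
          nlinarith [sq_nonneg c, hlb, Real.rpow_nonneg (abs_nonneg l) β, sq_nonneg (c * l)]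
        have hLl : |F l - 1| ≤ L * |l| ^ β := hFl
        have htot : |Real.cos (c*l) * F l - 1| ≤ (1+L) * D * |l| ^ β := by
          have hp : (0:ℝ) ≤ |l| ^ β := Real.rpow_nonneg (abs_nonneg l) β
          have : |Real.cos (c*l) * F l - 1| ≤ L * |l| ^ β + c^2 * Real.pi^2 * |l| ^ β := by
            linarith
          refine this.trans ?_
          rw [hD]
          nlinarith [hp, hL.le, sq_nonneg c, sq_nonneg Real.pi,
            mul_nonneg (mul_nonneg (sq_nonneg c) (sq_nonneg Real.pi)) hp,
            mul_nonneg hL.le (mul_nonneg (mul_nonneg (sq_nonneg c) (sq_nonneg Real.pi)) hp)]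
        have hlμ : |l| ^ β = T ^ (-β) * |μ| ^ β := by
          have : |l| = T⁻¹ * |μ| := by
            rw [show l = T⁻¹ * μ from rfl, abs_mul, abs_of_pos (inv_pos.2 hT0)]
          rw [this, Real.mul_rpow (inv_pos.2 hT0).le (abs_nonneg μ),
            Real.inv_rpow hT0.le, ← Real.rpow_neg hT0.le]
        rw [← hlμ]
        exact htot
      calc |μ| ^ (-δ) * ‖ψ μ‖ ^ 2 * |Real.cos (c * (T⁻¹ * μ)) * F (T⁻¹ * μ) - 1|
          ≤ |μ| ^ (-δ) * ‖ψ μ‖ ^ 2 * ((1+L) * D * (T ^ (-β) * |μ| ^ β)) := by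
            refine mul_le_mul_of_nonneg_left hcosF ?_
            exact mul_nonneg (Real.rpow_nonneg (abs_nonneg μ) _) (sq_nonneg _)
        _ = (D * (1+L) * T ^ (-β)) * ((|μ| ^ (-δ) * |μ| ^ β) * ‖ψ μ‖ ^ 2) := by ring
        _ = (D * (1+L) * T ^ (-β)) * (|μ| ^ (β - δ) * ‖ψ μ‖ ^ 2) := by
            rw [← Real.rpow_add (abs_pos.2 hμ0)]
            ring_nf
        _ ≤ (D * (1+L) * T ^ (-β)) * (|μ| ^ (β - δ) * (Cψ^2 * m2 μ)) := by
            refine mul_le_mul_of_nonneg_left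
              (mul_le_mul_of_nonneg_left (habs2 μ) (Real.rpow_nonneg (abs_nonneg μ) _)) ?_
            have h9 : (0:ℝ) ≤ T ^ (-β) := Real.rpow_nonneg hT0.le _
            have hD0 : (0:ℝ) ≤ D := by linarith
            have h1L : (0:ℝ) ≤ 1 + L := by linarith
            exact mul_nonneg (mul_nonneg hD0 h1L) h9
        _ = D * (1+L) * T ^ (-β) * W μ := by rw [hW]; ring
    · rw [hind, Set.indicator_of_notMem hmem]
      rw [Real.norm_eq_abs, zero_sub, abs_neg, abs_of_nonneg (hgnn μ)]
      have hTπμ : T * Real.pi ≤ |μ| := by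
        simp only [Set.mem_Ioc, not_and_or, not_lt, not_le] at hmem
        rcases hmem with h' | h'
        · have e : T * -Real.pi = -(T * Real.pi) := by ring
          rw [e] at h'
          linarith [neg_le_abs μ]
        · linarith [le_abs_self μ]
      have hμpos : (0:ℝ) < |μ| := lt_of_lt_of_le (by positivity) hTπμ
      have h5 : |μ| ^ (-β) ≤ (T * Real.pi) ^ (-β) :=
        Real.rpow_le_rpow_of_nonpos (by positivity) hTπμ (by linarith)
      have h6 : (T * Real.pi) ^ (-β) ≤ T ^ (-β) := by
        rw [Real.mul_rpow hT0.le hπ0.le]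
        have h7 : Real.pi ^ (-β) ≤ 1 :=
          Real.rpow_le_one_of_one_le_of_nonpos hπ1 (by linarith)
        have h8 : (0:ℝ) ≤ T ^ (-β) := Real.rpow_nonneg hT0.le _
        nlinarith
      have e4 : |μ| ^ (-δ) = |μ| ^ (-β) * |μ| ^ (β-δ) := by
        rw [← Real.rpow_add hμpos]
        ring_nf
      have hone : (1:ℝ) ≤ D * (1+L) := by nlinarith
      calc g μ = |μ| ^ (-β) * (|μ| ^ (β-δ) * ‖ψ μ‖ ^ 2) := by
            rw [hg]; dsimp only; rw [e4]; ring
        _ ≤ T ^ (-β) * (|μ| ^ (β-δ) * (Cψ^2 * m2 μ)) := by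
            refine mul_le_mul (h5.trans h6)
              (mul_le_mul_of_nonneg_left (habs2 μ) (Real.rpow_nonneg (abs_nonneg μ) _))
              (mul_nonneg (Real.rpow_nonneg (abs_nonneg μ) _) (sq_nonneg _))
              (Real.rpow_nonneg hT0.le _)
        _ = T ^ (-β) * W μ := by rw [hW]; ring
        _ ≤ D * (1+L) * T ^ (-β) * W μ := by
            have h9 : (0:ℝ) ≤ T ^ (-β) * W μ :=
              mul_nonneg (Real.rpow_nonneg hT0.le _) (hWnn μ)
            nlinarith
  have hSK : |S - (∫ l : ℝ, |l| ^ (-δ) * ‖ψ l‖ ^ 2)|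
      ≤ D * (1+L) * T ^ (-β) * IW := by
    have hKg : (∫ l : ℝ, |l| ^ (-δ) * ‖ψ l‖ ^ 2) = ∫ μ, g μ := rfl
    rw [hKg, hS2, ← integral_sub hindint hGint]
    have := norm_integral_le_of_norm_le
      (f := fun μ => ind μ - g μ)
      (hWint.const_mul (D * (1+L) * T ^ (-β))) hkey
    rw [Real.norm_eq_abs] at this
    calc |∫ μ, (ind μ - g μ)| ≤ ∫ μ, D * (1+L) * T ^ (-β) * W μ := this
      _ = D * (1+L) * T ^ (-β) * IW := by rw [MeasureTheory.integral_const_mul, hIW]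
  rw [hsub]
  have e5 : (2:ℝ) ^ ((j:ℝ) * δ) * S
      - (2:ℝ) ^ ((j:ℝ) * δ) * (∫ l : ℝ, |l| ^ (-δ) * ‖ψ l‖ ^ 2)
      = (2:ℝ) ^ ((j:ℝ) * δ)
        * (S - (∫ l : ℝ, |l| ^ (-δ) * ‖ψ l‖ ^ 2)) := by ring
  rw [e5, abs_mul, abs_of_pos (Real.rpow_pos_of_pos two_pos _)]
  have h2pos : (0:ℝ) < (2:ℝ) ^ ((j:ℝ) * (δ - β)) := Real.rpow_pos_of_pos two_pos _
  calc (2:ℝ) ^ ((j:ℝ) * δ) * |S - (∫ l : ℝ, |l| ^ (-δ) * ‖ψ l‖ ^ 2)|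
      ≤ (2:ℝ) ^ ((j:ℝ) * δ) * (D * (1+L) * T ^ (-β) * IW) :=
        mul_le_mul_of_nonneg_left hSK (Real.rpow_pos_of_pos two_pos _).le
    _ = (D * IW) * (1+L) * (T ^ δ * T ^ (-β)) := by rw [← hTr δ]; ring
    _ = (D * IW) * (1+L) * (2:ℝ) ^ ((j:ℝ) * (δ - β)) := by
        rw [← Real.rpow_add hT0, show δ + -β = δ - β by ring, hTr]
    _ ≤ (D * (IW + 1)) * (1+L) * (2:ℝ) ^ ((j:ℝ) * (δ - β)) := by
        have hDIW : D * IW ≤ D * (IW + 1) := by nlinarith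
        exact mul_le_mul_of_nonneg_right
          (mul_le_mul_of_nonneg_right hDIW (by linarith)) h2pos.le
end

section
/- Let α > 1, M ≥ 1, Cψ > 0 and let ψ̂ : ℝ → ℂ be measurable with |ψ̂(λ)| ≤ Cψ · min(|λ|^M, (1+|λ|)^(−α)) for all λ ∈ ℝ. Let β ∈ (0,2], c ∈ ℝ and δ ∈ ℝ with 1 + β − 2α < δ ≤ 2M. For each integer j ≥ 0 define K_j(δ,c) = ∫_ℝ |λ|^(−δ) cos(2^(−j) c λ) |ψ̂(λ)|² dλ. Then there exists a constant C > 0, depending only on α, β, M, Cψ, δ and c, such that for every L > 0, every measurable F : (−π,π) → ℝ satisfying |F(λ) − 1| ≤ L·|λ|^β for all λ ∈ (−π,π), and every integer j ≥ 0, one has | 2^j · ∫_{−π}^{π} |λ|^(−δ) cos(cλ) F(λ) |ψ̂(2^j λ)|² dλ − 2^{jδ} K_j(δ,c) | ≤ C (1+L) 2^{j(δ−β)}. -/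
open MeasureTheory Filter Real Set

private lemma neg_integrableOn {f : ℝ → ℝ} {s : Set ℝ} (h : IntegrableOn f s) :
    IntegrableOn (fun x => f (-x)) (-s) := by
  have := (MeasurePreserving.integrableOn_comp_preimage
      (Measure.measurePreserving_neg (volume : Measure ℝ))
      (Homeomorph.neg ℝ).measurableEmbedding (f := f) (s := s)).2 h
  simpa [Function.comp_def, neg_preimage] using this

private lemma integrable_min_rpow {a b : ℝ} (ha : -1 < a) (hb : b < -1) :
    Integrable (fun x : ℝ => min (|x| ^ a) (|x| ^ b)) := by
  have hmeas : Measurable fun x : ℝ => min (|x| ^ a) (|x| ^ b) :=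
    (measurable_id.abs.pow measurable_const).min (measurable_id.abs.pow measurable_const)
  have hnn : ∀ x : ℝ, 0 ≤ min (|x| ^ a) (|x| ^ b) := fun x =>
    le_min (rpow_nonneg (abs_nonneg x) a) (rpow_nonneg (abs_nonneg x) b)
  have h1 : IntegrableOn (fun x : ℝ => min (|x| ^ a) (|x| ^ b)) (Ioo (0:ℝ) 1) := by
    have hbase : IntegrableOn (fun x : ℝ => x ^ a) (Ioo (0:ℝ) 1) :=
      (intervalIntegral.integrableOn_Ioo_rpow_iff one_pos).2 ha
    apply Integrable.mono' hbase hmeas.aestronglyMeasurable.restrict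
    filter_upwards [ae_restrict_mem measurableSet_Ioo] with x hx
    rw [Real.norm_eq_abs, abs_of_nonneg (hnn x)]
    calc min (|x| ^ a) (|x| ^ b) ≤ |x| ^ a := min_le_left _ _
      _ = x ^ a := by rw [abs_of_pos hx.1]
  have h2 : IntegrableOn (fun x : ℝ => min (|x| ^ a) (|x| ^ b)) (Ioi (1:ℝ)) := by
    have hbase : IntegrableOn (fun x : ℝ => x ^ b) (Ioi (1:ℝ)) :=
      integrableOn_Ioi_rpow_of_lt hb one_pos
    apply Integrable.mono' hbase hmeas.aestronglyMeasurable.restrict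
    filter_upwards [ae_restrict_mem measurableSet_Ioi] with x hx
    rw [Real.norm_eq_abs, abs_of_nonneg (hnn x)]
    calc min (|x| ^ a) (|x| ^ b) ≤ |x| ^ b := min_le_right _ _
      _ = x ^ b := by rw [abs_of_pos (lt_trans one_pos hx)]
  have hIci : IntegrableOn (fun x : ℝ => min (|x| ^ a) (|x| ^ b)) (Ici (0:ℝ)) := by
    rw [← Icc_union_Ioi_eq_Ici (zero_le_one (α := ℝ))]
    refine (integrableOn_union).2 ⟨?_, h2⟩
    rw [integrableOn_Icc_iff_integrableOn_Ioo]
    exact h1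
  have hIio : IntegrableOn (fun x : ℝ => min (|x| ^ a) (|x| ^ b)) (Iio (0:ℝ)) := by
    have := neg_integrableOn (hIci.mono_set Ioi_subset_Ici_self)
    rw [neg_Ioi, neg_zero] at this
    refine this.congr_fun (fun x _ => ?_) measurableSet_Iio
    simp [abs_neg]
  rw [← integrableOn_univ, ← Iio_union_Ici (a := (0:ℝ))]
  exact (integrableOn_union).2 ⟨hIio, hIci⟩

section
variable {α M Cψ : ℝ} {ψ : ℝ → ℂ}

private lemma psi_zero (hM : 1 ≤ M)
    (hψ : ∀ l : ℝ, ‖ψ l‖ ≤ Cψ * min (|l| ^ M) ((1 + |l|) ^ (-α))) :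
    ‖ψ 0‖ = 0 := by
  have h := hψ 0
  rw [abs_zero, Real.zero_rpow (by linarith : M ≠ 0), add_zero, Real.one_rpow,
    min_eq_left zero_le_one, mul_zero] at h
  exact le_antisymm h (norm_nonneg _)

/-- pointwise bound for the squared wavelet weight, away from 0 -/
private lemma psi_sq_le (hα : 1 < α) (hCψ : 0 < Cψ)
    (hψ : ∀ l : ℝ, ‖ψ l‖ ≤ Cψ * min (|l| ^ M) ((1 + |l|) ^ (-α)))
    {x : ℝ} (hx : x ≠ 0) (t : ℝ) :
    |x| ^ t * ‖ψ x‖ ^ 2 ≤ Cψ ^ 2 * min (|x| ^ (t + 2 * M)) (|x| ^ (t - 2 * α)) := by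
  have hx0 : 0 < |x| := abs_pos.2 hx
  have hsq : ‖ψ x‖ ^ 2 ≤ Cψ ^ 2 * (min (|x| ^ M) ((1 + |x|) ^ (-α))) ^ 2 := by
    rw [← mul_pow]
    exact pow_le_pow_left₀ (norm_nonneg _) (hψ x) 2
  have hmin_nonneg : (0:ℝ) ≤ min (|x| ^ M) ((1 + |x|) ^ (-α)) :=
    le_min (rpow_nonneg hx0.le _) (rpow_nonneg (by positivity) _)
  have h1 : (min (|x| ^ M) ((1 + |x|) ^ (-α))) ^ 2 ≤ |x| ^ (2 * M) := by
    calc (min (|x| ^ M) ((1 + |x|) ^ (-α))) ^ 2 ≤ (|x| ^ M) ^ 2 :=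
          pow_le_pow_left₀ hmin_nonneg (min_le_left _ _) 2
      _ = |x| ^ (2 * M) := by
          rw [sq, ← Real.rpow_add hx0]; ring_nf
  have h2 : (min (|x| ^ M) ((1 + |x|) ^ (-α))) ^ 2 ≤ |x| ^ (-(2 * α)) := by
    have hle : (1 + |x|) ^ (-α) ≤ |x| ^ (-α) :=
      rpow_le_rpow_of_nonpos hx0 (by linarith) (by linarith)
    calc (min (|x| ^ M) ((1 + |x|) ^ (-α))) ^ 2 ≤ (|x| ^ (-α)) ^ 2 :=
          pow_le_pow_left₀ hmin_nonneg ((min_le_right (|x| ^ M) ((1 + |x|) ^ (-α))).trans hle) 2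
      _ = |x| ^ (-(2 * α)) := by
          rw [sq, ← Real.rpow_add hx0]; ring_nf
  rw [mul_min_of_nonneg _ _ (by positivity : (0:ℝ) ≤ Cψ ^ 2)]
  refine le_min ?_ ?_
  · calc |x| ^ t * ‖ψ x‖ ^ 2
        ≤ |x| ^ t * (Cψ ^ 2 * |x| ^ (2 * M)) := by
          refine mul_le_mul_of_nonneg_left ?_ (rpow_nonneg hx0.le t)
          exact hsq.trans (mul_le_mul_of_nonneg_left h1 (by positivity))
      _ = Cψ ^ 2 * |x| ^ (t + 2 * M) := by rw [Real.rpow_add hx0]; ring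
  · calc |x| ^ t * ‖ψ x‖ ^ 2
        ≤ |x| ^ t * (Cψ ^ 2 * |x| ^ (-(2 * α))) := by
          refine mul_le_mul_of_nonneg_left ?_ (rpow_nonneg hx0.le t)
          exact hsq.trans (mul_le_mul_of_nonneg_left h2 (by positivity))
      _ = Cψ ^ 2 * |x| ^ (t - 2 * α) := by
          rw [show t - 2*α = t + -(2*α) by ring, Real.rpow_add hx0]; ring

private lemma integrable_weight (hα : 1 < α) (hM : 1 ≤ M) (hCψ : 0 < Cψ)
    (hψmeas : Measurable ψ)
    (hψ : ∀ l : ℝ, ‖ψ l‖ ≤ Cψ * min (|l| ^ M) ((1 + |l|) ^ (-α)))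
    (t : ℝ) (h1 : -1 < t + 2 * M) (h2 : t - 2 * α < -1) :
    Integrable (fun x : ℝ => |x| ^ t * ‖ψ x‖ ^ 2) := by
  have hmeasA : Measurable fun x : ℝ => ‖ψ x‖ := by
    have : (fun x : ℝ => ‖ψ x‖) = fun x => ‖ψ x‖ := by
      rfl
    rw [this]; exact hψmeas.norm
  apply Integrable.mono' ((integrable_min_rpow h1 h2).const_mul (Cψ ^ 2))
  · exact ((measurable_id.abs.pow measurable_const).mul
      (hmeasA.pow measurable_const)).aestronglyMeasurable
  · refine ae_of_all _ fun x => ?_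
    rw [Real.norm_eq_abs, abs_of_nonneg (by positivity)]
    rcases eq_or_ne x 0 with rfl | hx
    · rw [psi_zero hM hψ]
      have : (0:ℝ) ≤ min (|(0:ℝ)| ^ (t + 2*M)) (|(0:ℝ)| ^ (t - 2*α)) :=
        le_min (rpow_nonneg (abs_nonneg _) _) (rpow_nonneg (abs_nonneg _) _)
      nlinarith [sq_nonneg Cψ]
    · exact psi_sq_le hα hCψ hψ hx t

end

open MeasureTheory Filter

set_option maxHeartbeats 1000000 in
/-- second-order wavelet-covariance approximation with oscillating
factor retained in the limit integral `K_j(δ, c)`. -/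
theorem stmt_1 (α M Cψ : ℝ) (hα : 1 < α) (hM : 1 ≤ M) (hCψ : 0 < Cψ)
    (ψ : ℝ → ℂ) (hψmeas : Measurable ψ)
    (hψ : ∀ l : ℝ, ‖ψ l‖ ≤ Cψ * min (|l| ^ M) ((1 + |l|) ^ (-α)))
    (β : ℝ) (hβ : β ∈ Set.Ioc (0:ℝ) 2) (c δ : ℝ)
    (hδ1 : 1 + β - 2 * α < δ) (hδ2 : δ ≤ 2 * M)
    (Kj : ℕ → ℝ)
    (hKj : ∀ j : ℕ, Kj j =
      ∫ l : ℝ, |l| ^ (-δ) * Real.cos ((2:ℝ) ^ (-(j:ℝ)) * c * l) * ‖ψ l‖ ^ 2) :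
    ∃ C > 0, ∀ L > 0, ∀ F : ℝ → ℝ, Measurable F →
      (∀ l ∈ Set.Ioo (-Real.pi) Real.pi, |F l - 1| ≤ L * |l| ^ β) →
      ∀ j : ℕ,
        |(2:ℝ) ^ j * (∫ l in (-Real.pi)..Real.pi,
              |l| ^ (-δ) * Real.cos (c * l) * F l * ‖ψ ((2:ℝ) ^ j * l)‖ ^ 2)
          - (2:ℝ) ^ ((j:ℝ) * δ) * Kj j|
        ≤ C * (1 + L) * (2:ℝ) ^ ((j:ℝ) * (δ - β)) := by
  obtain ⟨hβ0, hβ2⟩ := hβ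
  have hπ : (0:ℝ) < Real.pi := Real.pi_pos
  have hmeasA : Measurable fun x : ℝ => ‖ψ x‖ := by
    have : (fun x : ℝ => ‖ψ x‖) = fun x => ‖ψ x‖ := by
      rfl
    rw [this]; exact hψmeas.norm
  have hψ0 : ‖ψ 0‖ = 0 := psi_zero hM hψ
  -- integrable weights
  have hg : Integrable (fun x : ℝ => |x| ^ (-δ) * ‖ψ x‖ ^ 2) :=
    integrable_weight hα hM hCψ hψmeas hψ (-δ) (by linarith) (by linarith)
  have hg1 : Integrable (fun x : ℝ => |x| ^ (β - δ) * ‖ψ x‖ ^ 2) :=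
    integrable_weight hα hM hCψ hψmeas hψ (β - δ) (by linarith) (by linarith)
  set A : ℝ := ∫ x : ℝ, |x| ^ (β - δ) * ‖ψ x‖ ^ 2 with hAdef
  have hA : 0 ≤ A := integral_nonneg fun x => by positivity
  have hs1 : -δ - 2*α + 1 < 0 := by linarith
  have hslt : -δ - 2*α < -1 := by linarith
  set B : ℝ := 2 * Cψ ^ 2 * Real.pi ^ (-δ - 2*α + 1) * (-(-δ - 2*α + 1))⁻¹ with hBdef
  have hπpow : (0:ℝ) < Real.pi ^ (-δ - 2*α + 1) := Real.rpow_pos_of_pos hπ _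
  have hinvpos : (0:ℝ) < (-(-δ - 2*α + 1))⁻¹ := inv_pos.2 (by linarith)
  have hB : 0 ≤ B := by positivity
  refine ⟨A + B + 1, by linarith, ?_⟩
  intro L hL F hFmeas hF j
  set a : ℝ := (2:ℝ) ^ j with hadef
  have ha : (0:ℝ) < a := by positivity
  have ha1 : (1:ℝ) ≤ a := one_le_pow₀ one_le_two
  have haR : a = (2:ℝ) ^ ((j:ℝ)) := (Real.rpow_natCast 2 j).symm
  have hainv : a⁻¹ = (2:ℝ) ^ (-(j:ℝ)) := by
    rw [haR, ← Real.rpow_neg (by norm_num : (0:ℝ) ≤ 2)]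
  have haδ : (2:ℝ) ^ ((j:ℝ) * δ) = a ^ δ := by
    rw [Real.rpow_mul (by norm_num : (0:ℝ) ≤ 2), ← haR]
  have haδβ : (2:ℝ) ^ ((j:ℝ) * (δ - β)) = a ^ (δ - β) := by
    rw [Real.rpow_mul (by norm_num : (0:ℝ) ≤ 2), ← haR]
  set T : ℝ := a * Real.pi with hTdef
  have hT : 0 < T := by positivity
  have hTle : -T ≤ T := by linarith
  set G : ℝ → ℝ := fun x => |x| ^ (-δ) * Real.cos ((2:ℝ) ^ (-(j:ℝ)) * c * x) *
      F (a⁻¹ * x) * ‖ψ x‖ ^ 2 with hGdef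
  set G0 : ℝ → ℝ := fun x => |x| ^ (-δ) * Real.cos ((2:ℝ) ^ (-(j:ℝ)) * c * x) *
      ‖ψ x‖ ^ 2 with hG0def
  have hmeasG0 : Measurable G0 :=
    ((measurable_id.abs.pow measurable_const).mul
      ((measurable_id.const_mul ((2:ℝ) ^ (-(j:ℝ)) * c)).cos)).mul
      (hmeasA.pow measurable_const)
  have hmeasG : Measurable G :=
    (((measurable_id.abs.pow measurable_const).mul
      ((measurable_id.const_mul ((2:ℝ) ^ (-(j:ℝ)) * c)).cos)).mul
      (hFmeas.comp (measurable_id.const_mul a⁻¹))).mul (hmeasA.pow measurable_const)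
  -- integrability of G0 on ℝ
  have hG0bd : ∀ x : ℝ, |G0 x| ≤ |x| ^ (-δ) * ‖ψ x‖ ^ 2 := by
    intro x
    rw [hG0def]
    simp only
    rw [abs_mul, abs_mul, abs_of_nonneg (rpow_nonneg (abs_nonneg x) _),
      abs_of_nonneg (by positivity : (0:ℝ) ≤ ‖ψ x‖ ^ 2)]
    have h1 : |Real.cos ((2:ℝ) ^ (-(j:ℝ)) * c * x)| ≤ 1 := abs_cos_le_one _
    have r0 : (0:ℝ) ≤ |x| ^ (-δ) := rpow_nonneg (abs_nonneg x) _
    have p0 : (0:ℝ) ≤ ‖ψ x‖ ^ 2 := by positivity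
    calc |x| ^ (-δ) * |Real.cos ((2:ℝ) ^ (-(j:ℝ)) * c * x)| * ‖ψ x‖ ^ 2
        ≤ |x| ^ (-δ) * 1 * ‖ψ x‖ ^ 2 :=
          mul_le_mul_of_nonneg_right (mul_le_mul_of_nonneg_left h1 r0) p0
      _ = |x| ^ (-δ) * ‖ψ x‖ ^ 2 := by ring
  have hG0i : Integrable G0 := by
    apply hg.mono' hmeasG0.aestronglyMeasurable
    refine ae_of_all _ fun x => ?_
    rw [Real.norm_eq_abs]; exact hG0bd x
  -- integrability of G on Ioo (-T) T
  have hmemIoo : ∀ x ∈ Ioo (-T) T, a⁻¹ * x ∈ Ioo (-Real.pi) Real.pi := by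
    intro x hx
    constructor
    · have := mul_lt_mul_of_pos_left hx.1 (inv_pos.2 ha)
      rw [hTdef] at this
      calc -Real.pi = a⁻¹ * -(a * Real.pi) := by field_simp; try ring
        _ < a⁻¹ * x := this
    · have := mul_lt_mul_of_pos_left hx.2 (inv_pos.2 ha)
      rw [hTdef] at this
      calc a⁻¹ * x < a⁻¹ * (a * Real.pi) := this
        _ = Real.pi := by field_simp; try ring
  have hFbd : ∀ x ∈ Ioo (-T) T, |F (a⁻¹ * x)| ≤ 1 + L * Real.pi ^ β := by
    intro x hx
    have hy := hmemIoo x hx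
    have h1 := hF _ hy
    have h2 : |a⁻¹ * x| ^ β ≤ Real.pi ^ β := by
      apply Real.rpow_le_rpow (abs_nonneg _) _ hβ0.le
      exact (abs_lt.2 ⟨hy.1, hy.2⟩).le
    have h3 : |F (a⁻¹ * x)| ≤ |F (a⁻¹ * x) - 1| + 1 := by
      calc |F (a⁻¹ * x)| = |(F (a⁻¹ * x) - 1) + 1| := by ring_nf
        _ ≤ |F (a⁻¹ * x) - 1| + |(1:ℝ)| := abs_add_le _ _
        _ = |F (a⁻¹ * x) - 1| + 1 := by rw [abs_one]
    nlinarith [mul_le_mul_of_nonneg_left h2 hL.le]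
  have hGi : IntegrableOn G (Ioo (-T) T) := by
    apply Integrable.mono' (((hg.const_mul (1 + L * Real.pi ^ β))).integrableOn)
      hmeasG.aestronglyMeasurable.restrict
    filter_upwards [ae_restrict_mem measurableSet_Ioo] with x hx
    rw [Real.norm_eq_abs, hGdef]
    simp only
    rw [abs_mul, abs_mul, abs_mul, abs_of_nonneg (rpow_nonneg (abs_nonneg x) _),
      abs_of_nonneg (by positivity : (0:ℝ) ≤ ‖ψ x‖ ^ 2)]
    have h1 : |Real.cos ((2:ℝ) ^ (-(j:ℝ)) * c * x)| ≤ 1 := abs_cos_le_one _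
    have h2 := hFbd x hx
    have r0 : (0:ℝ) ≤ |x| ^ (-δ) := rpow_nonneg (abs_nonneg x) _
    have p0 : (0:ℝ) ≤ ‖ψ x‖ ^ 2 := by positivity
    have c0 : (0:ℝ) ≤ |Real.cos ((2:ℝ) ^ (-(j:ℝ)) * c * x)| := abs_nonneg _
    have f0 : (0:ℝ) ≤ |F (a⁻¹ * x)| := abs_nonneg _
    calc |x| ^ (-δ) * |Real.cos ((2:ℝ) ^ (-(j:ℝ)) * c * x)| * |F (a⁻¹ * x)| *
          ‖ψ x‖ ^ 2
        ≤ |x| ^ (-δ) * 1 * (1 + L * Real.pi ^ β) * ‖ψ x‖ ^ 2 := by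
          apply mul_le_mul_of_nonneg_right _ p0
          exact mul_le_mul (mul_le_mul_of_nonneg_left h1 r0) h2 f0 (by positivity)
      _ = (1 + L * Real.pi ^ β) * (|x| ^ (-δ) * ‖ψ x‖ ^ 2) := by ring
  have hG0Ioo : IntegrableOn G0 (Ioo (-T) T) := hG0i.integrableOn
  have hGIoc : IntegrableOn G (Ioc (-T) T) := by
    rw [integrableOn_Ioc_iff_integrableOn_Ioo]; exact hGi
  -- change of variables
  have key1 : a * (∫ l in (-Real.pi)..Real.pi,
        |l| ^ (-δ) * Real.cos (c * l) * F l * ‖ψ (a * l)‖ ^ 2)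
      = a ^ δ * ∫ x in Ioc (-T) T, G x := by
    have hcomp : ∀ x : ℝ, |a⁻¹ * x| ^ (-δ) * Real.cos (c * (a⁻¹ * x)) * F (a⁻¹ * x) *
        ‖ψ (a * (a⁻¹ * x))‖ ^ 2 = a ^ δ * G x := by
      intro x
      have h1 : a * (a⁻¹ * x) = x := by field_simp
      have h2 : |a⁻¹ * x| ^ (-δ) = a ^ δ * |x| ^ (-δ) := by
        rw [abs_mul, abs_of_pos (inv_pos.2 ha), Real.mul_rpow (inv_nonneg.2 ha.le) (abs_nonneg x),
          Real.inv_rpow ha.le, ← Real.rpow_neg ha.le, neg_neg]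
      have h3 : c * (a⁻¹ * x) = (2:ℝ) ^ (-(j:ℝ)) * c * x := by rw [← hainv]; ring
      rw [h1, h2, h3, hGdef]
      ring
    have e1 : a⁻¹ * -T = -Real.pi := by rw [hTdef]; field_simp; try ring
    have e2 : a⁻¹ * T = Real.pi := by rw [hTdef]; field_simp; try ring
    have hchg := intervalIntegral.integral_comp_mul_left
      (f := fun l => |l| ^ (-δ) * Real.cos (c * l) * F l * ‖ψ (a * l)‖ ^ 2)
      (a := -T) (b := T) (c := a⁻¹) (inv_ne_zero ha.ne')
    rw [e1, e2, inv_inv, smul_eq_mul] at hchg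
    calc a * ∫ l in (-Real.pi)..Real.pi,
          |l| ^ (-δ) * Real.cos (c * l) * F l * ‖ψ (a * l)‖ ^ 2
        = ∫ x in (-T)..T, (fun l => |l| ^ (-δ) * Real.cos (c * l) * F l *
            ‖ψ (a * l)‖ ^ 2) (a⁻¹ * x) := hchg.symm
      _ = ∫ x in (-T)..T, a ^ δ * G x :=
          intervalIntegral.integral_congr (fun x _ => hcomp x)
      _ = a ^ δ * ∫ x in (-T)..T, G x := intervalIntegral.integral_const_mul _ _
      _ = a ^ δ * ∫ x in Ioc (-T) T, G x := by
          rw [intervalIntegral.integral_of_le hTle]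
  have key2 : Kj j = (∫ x in Ioc (-T) T, G0 x) + ∫ x in (Ioc (-T) T)ᶜ, G0 x := by
    rw [hKj j]
    exact (integral_add_compl measurableSet_Ioc hG0i).symm
  -- Term 1 bound
  have hIocIooG : ∫ x in Ioc (-T) T, G x = ∫ x in Ioo (-T) T, G x :=
    (setIntegral_congr_set Ioo_ae_eq_Ioc).symm
  have hIocIooG0 : ∫ x in Ioc (-T) T, G0 x = ∫ x in Ioo (-T) T, G0 x :=
    (setIntegral_congr_set Ioo_ae_eq_Ioc).symm
  have ht1 : |(∫ x in Ioo (-T) T, G x) - ∫ x in Ioo (-T) T, G0 x| ≤ L * A * a⁻¹ ^ β := by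
    rw [← integral_sub hGi hG0Ioo]
    have habs : |∫ x in Ioo (-T) T, (G x - G0 x)| ≤ ∫ x in Ioo (-T) T, |G x - G0 x| := by
      simpa [Real.norm_eq_abs] using
        norm_integral_le_integral_norm (μ := volume.restrict (Ioo (-T) T))
          (fun x => G x - G0 x)
    refine habs.trans ?_
    have hptw : ∀ x ∈ Ioo (-T) T, |G x - G0 x| ≤
        (L * a⁻¹ ^ β) * (|x| ^ (β - δ) * ‖ψ x‖ ^ 2) := by
      intro x hx
      have hdiff : G x - G0 x = (|x| ^ (-δ) * Real.cos ((2:ℝ) ^ (-(j:ℝ)) * c * x) *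
          ‖ψ x‖ ^ 2) * (F (a⁻¹ * x) - 1) := by
        rw [hGdef, hG0def]; ring
      rcases eq_or_ne x 0 with rfl | hne
      · rw [hdiff, hψ0]
        simp
      · have hx0 : (0:ℝ) < |x| := abs_pos.2 hne
        have hy := hmemIoo x hx
        have hFb := hF _ hy
        have hyabs : |a⁻¹ * x| ^ β = a⁻¹ ^ β * |x| ^ β := by
          rw [abs_mul, abs_of_pos (inv_pos.2 ha),
            Real.mul_rpow (inv_nonneg.2 ha.le) (abs_nonneg x)]
        calc |G x - G0 x| = |x| ^ (-δ) * |Real.cos ((2:ℝ) ^ (-(j:ℝ)) * c * x)| *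
              ‖ψ x‖ ^ 2 * |F (a⁻¹ * x) - 1| := by
              rw [hdiff, abs_mul, abs_mul, abs_mul,
                abs_of_nonneg (rpow_nonneg (abs_nonneg x) _),
                abs_of_nonneg (by positivity : (0:ℝ) ≤ ‖ψ x‖ ^ 2)]
          _ ≤ |x| ^ (-δ) * 1 * ‖ψ x‖ ^ 2 * (L * (a⁻¹ ^ β * |x| ^ β)) := by
              have h1 : |Real.cos ((2:ℝ) ^ (-(j:ℝ)) * c * x)| ≤ 1 := abs_cos_le_one _
              have h2 : |F (a⁻¹ * x) - 1| ≤ L * (a⁻¹ ^ β * |x| ^ β) := by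
                rw [← hyabs]; exact hFb
              apply mul_le_mul _ h2 (abs_nonneg _) (by positivity)
              apply mul_le_mul_of_nonneg_right _ (by positivity)
              exact mul_le_mul_of_nonneg_left h1 (rpow_nonneg (abs_nonneg x) _)
          _ = (L * a⁻¹ ^ β) * ((|x| ^ (-δ) * |x| ^ β) * ‖ψ x‖ ^ 2) := by ring
          _ = (L * a⁻¹ ^ β) * (|x| ^ (β - δ) * ‖ψ x‖ ^ 2) := by
              rw [← Real.rpow_add hx0]
              ring_nf
    calc ∫ x in Ioo (-T) T, |G x - G0 x|
        ≤ ∫ x in Ioo (-T) T, (L * a⁻¹ ^ β) * (|x| ^ (β - δ) * ‖ψ x‖ ^ 2) :=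
          setIntegral_mono_on ((hGi.sub hG0Ioo).abs) ((hg1.const_mul _).integrableOn)
            measurableSet_Ioo hptw
      _ ≤ ∫ x : ℝ, (L * a⁻¹ ^ β) * (|x| ^ (β - δ) * ‖ψ x‖ ^ 2) := by
          apply setIntegral_le_integral (hg1.const_mul _)
          refine ae_of_all _ fun x => ?_
          positivity
      _ = L * A * a⁻¹ ^ β := by
          rw [integral_const_mul, ← hAdef]; ring
  -- Term 2 bound
  have hcompl_eq : (Ioc (-T) T)ᶜ = Iic (-T) ∪ Ioi T := by
    ext x
    simp only [Set.mem_compl_iff, Set.mem_Ioc, not_and_or, not_lt, not_le, Set.mem_union,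
      Set.mem_Iic, Set.mem_Ioi]
  have htailptw : ∀ x : ℝ, x ≠ 0 →
      |x| ^ (-δ) * ‖ψ x‖ ^ 2 ≤ Cψ ^ 2 * |x| ^ (-δ - 2*α) :=
    fun x hx => (psi_sq_le hα hCψ hψ hx (-δ)).trans
      (mul_le_mul_of_nonneg_left (min_le_right _ _) (by positivity))
  have hIoiT : ∫ x in Ioi T, |x| ^ (-δ) * ‖ψ x‖ ^ 2
      ≤ Cψ ^ 2 * (-T ^ (-δ - 2*α + 1) / (-δ - 2*α + 1)) := by
    have hbd : ∀ x ∈ Ioi T, |x| ^ (-δ) * ‖ψ x‖ ^ 2 ≤ Cψ ^ 2 * x ^ (-δ - 2*α) := by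
      intro x hx
      have hx0 : 0 < x := hT.trans hx
      have := htailptw x hx0.ne'
      simpa [abs_of_pos hx0] using this
    calc ∫ x in Ioi T, |x| ^ (-δ) * ‖ψ x‖ ^ 2
        ≤ ∫ x in Ioi T, Cψ ^ 2 * x ^ (-δ - 2*α) :=
          setIntegral_mono_on hg.integrableOn
            ((integrableOn_Ioi_rpow_of_lt hslt hT).const_mul _) measurableSet_Ioi hbd
      _ = Cψ ^ 2 * (-T ^ (-δ - 2*α + 1) / (-δ - 2*α + 1)) := by
          rw [integral_const_mul, integral_Ioi_rpow_of_lt hslt hT]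
  have hIicT : ∫ x in Iic (-T), |x| ^ (-δ) * ‖ψ x‖ ^ 2
      ≤ Cψ ^ 2 * (-T ^ (-δ - 2*α + 1) / (-δ - 2*α + 1)) := by
    have hnegint : IntegrableOn (fun x => |(-x)| ^ (-δ) * ‖ψ (-x)‖ ^ 2) (Ioi T) := by
      have := neg_integrableOn (hg.integrableOn (s := Iio (-T)))
      simpa using this
    have heq : ∫ x in Iic (-T), |x| ^ (-δ) * ‖ψ x‖ ^ 2
        = ∫ x in Ioi T, |(-x)| ^ (-δ) * ‖ψ (-x)‖ ^ 2 :=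
      (integral_comp_neg_Ioi T (fun x => |x| ^ (-δ) * ‖ψ x‖ ^ 2)).symm
    rw [heq]
    have hbd : ∀ x ∈ Ioi T, |(-x)| ^ (-δ) * ‖ψ (-x)‖ ^ 2
        ≤ Cψ ^ 2 * x ^ (-δ - 2*α) := by
      intro x hx
      have hx0 : 0 < x := hT.trans hx
      have := htailptw (-x) (by simpa using hx0.ne')
      simpa [abs_neg, abs_of_pos hx0] using this
    calc ∫ x in Ioi T, |(-x)| ^ (-δ) * ‖ψ (-x)‖ ^ 2
        ≤ ∫ x in Ioi T, Cψ ^ 2 * x ^ (-δ - 2*α) :=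
          setIntegral_mono_on hnegint
            ((integrableOn_Ioi_rpow_of_lt hslt hT).const_mul _) measurableSet_Ioi hbd
      _ = Cψ ^ 2 * (-T ^ (-δ - 2*α + 1) / (-δ - 2*α + 1)) := by
          rw [integral_const_mul, integral_Ioi_rpow_of_lt hslt hT]
  have ht2 : |∫ x in (Ioc (-T) T)ᶜ, G0 x| ≤ B * a⁻¹ ^ β := by
    have h5 : |∫ x in (Ioc (-T) T)ᶜ, G0 x| ≤ ∫ x in (Ioc (-T) T)ᶜ, |G0 x| := by
      simpa [Real.norm_eq_abs] using
        norm_integral_le_integral_norm (μ := volume.restrict ((Ioc (-T) T)ᶜ)) G0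
    have h6 : ∫ x in (Ioc (-T) T)ᶜ, |G0 x| ≤
        ∫ x in (Ioc (-T) T)ᶜ, |x| ^ (-δ) * ‖ψ x‖ ^ 2 :=
      setIntegral_mono_on (hG0i.abs.integrableOn) hg.integrableOn
        measurableSet_Ioc.compl (fun x _ => hG0bd x)
    have h7 : ∫ x in (Ioc (-T) T)ᶜ, |x| ^ (-δ) * ‖ψ x‖ ^ 2
        = (∫ x in Iic (-T), |x| ^ (-δ) * ‖ψ x‖ ^ 2)
          + ∫ x in Ioi T, |x| ^ (-δ) * ‖ψ x‖ ^ 2 := by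
      rw [hcompl_eq]
      exact setIntegral_union (Set.Iic_disjoint_Ioi hTle) measurableSet_Ioi
        hg.integrableOn hg.integrableOn
    have hval : Cψ ^ 2 * (-T ^ (-δ - 2*α + 1) / (-δ - 2*α + 1))
        = Cψ ^ 2 * T ^ (-δ - 2*α + 1) * (-(-δ - 2*α + 1))⁻¹ := by
      rw [neg_div, div_eq_mul_inv, ← mul_neg, neg_inv, ← mul_assoc]
    have hTpow : T ^ (-δ - 2*α + 1) ≤ Real.pi ^ (-δ - 2*α + 1) * a⁻¹ ^ β := by
      have h1 : T ^ (-δ - 2*α + 1) = a ^ (-δ - 2*α + 1) * Real.pi ^ (-δ - 2*α + 1) := by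
        rw [hTdef, Real.mul_rpow ha.le hπ.le]
      have h2 : a ^ (-δ - 2*α + 1) ≤ a ^ (-β) :=
        Real.rpow_le_rpow_of_exponent_le ha1 (by linarith)
      have h3 : a ^ (-β) = a⁻¹ ^ β := by
        rw [Real.rpow_neg ha.le, Real.inv_rpow ha.le]
      rw [h1]
      calc a ^ (-δ - 2*α + 1) * Real.pi ^ (-δ - 2*α + 1)
          ≤ a ^ (-β) * Real.pi ^ (-δ - 2*α + 1) :=
            mul_le_mul_of_nonneg_right h2 hπpow.le
        _ = Real.pi ^ (-δ - 2*α + 1) * a⁻¹ ^ β := by rw [h3]; ring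
    calc |∫ x in (Ioc (-T) T)ᶜ, G0 x|
        ≤ ∫ x in (Ioc (-T) T)ᶜ, |x| ^ (-δ) * ‖ψ x‖ ^ 2 := h5.trans h6
      _ = (∫ x in Iic (-T), |x| ^ (-δ) * ‖ψ x‖ ^ 2)
          + ∫ x in Ioi T, |x| ^ (-δ) * ‖ψ x‖ ^ 2 := h7
      _ ≤ 2 * (Cψ ^ 2 * (-T ^ (-δ - 2*α + 1) / (-δ - 2*α + 1))) := by
          nlinarith [hIicT, hIoiT]
      _ = 2 * (Cψ ^ 2 * T ^ (-δ - 2*α + 1) * (-(-δ - 2*α + 1))⁻¹) := by rw [hval]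
      _ ≤ 2 * (Cψ ^ 2 * (Real.pi ^ (-δ - 2*α + 1) * a⁻¹ ^ β) * (-(-δ - 2*α + 1))⁻¹) := by
          have := mul_le_mul_of_nonneg_left hTpow (by positivity : (0:ℝ) ≤ Cψ ^ 2)
          nlinarith [hinvpos]
      _ = B * a⁻¹ ^ β := by rw [hBdef]; ring
  -- assemble
  rw [haδ, key1, key2]
  have hstep : a ^ δ * (∫ x in Ioc (-T) T, G x) -
      a ^ δ * ((∫ x in Ioc (-T) T, G0 x) + ∫ x in (Ioc (-T) T)ᶜ, G0 x)
      = a ^ δ * (((∫ x in Ioo (-T) T, G x) - ∫ x in Ioo (-T) T, G0 x)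
          - ∫ x in (Ioc (-T) T)ᶜ, G0 x) := by
    rw [hIocIooG, hIocIooG0]; ring
  rw [hstep, abs_mul, abs_of_pos (Real.rpow_pos_of_pos ha δ)]
  have habs2 : |((∫ x in Ioo (-T) T, G x) - ∫ x in Ioo (-T) T, G0 x)
      - ∫ x in (Ioc (-T) T)ᶜ, G0 x|
      ≤ L * A * a⁻¹ ^ β + B * a⁻¹ ^ β :=
    (abs_sub _ _).trans (add_le_add ht1 ht2)
  calc a ^ δ * |((∫ x in Ioo (-T) T, G x) - ∫ x in Ioo (-T) T, G0 x)
      - ∫ x in (Ioc (-T) T)ᶜ, G0 x|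
      ≤ a ^ δ * (L * A * a⁻¹ ^ β + B * a⁻¹ ^ β) :=
        mul_le_mul_of_nonneg_left habs2 (Real.rpow_pos_of_pos ha δ).le
    _ = (L * A + B) * (a ^ δ * a ^ (-β)) := by
        rw [Real.rpow_neg ha.le, Real.inv_rpow ha.le]; ring
    _ = (L * A + B) * a ^ (δ - β) := by
        rw [← Real.rpow_add ha]; ring_nf
    _ ≤ (A + B + 1) * (1 + L) * (2:ℝ) ^ ((j:ℝ) * (δ - β)) := by
        rw [haδβ]
        have hpos : (0:ℝ) < a ^ (δ - β) := Real.rpow_pos_of_pos ha _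
        have : L * A + B ≤ (A + B + 1) * (1 + L) := by nlinarith
        nlinarith
end

section
/- For all real numbers d₁, d₂ and all λ ∈ (0,π), with complex powers taken as principal branch powers, the real part of (1 − e^{−iλ})^{−d₁} · (1 − e^{iλ})^{−d₂} equals (2 sin(λ/2))^{−(d₁+d₂)} · cos((π−λ)(d₁−d₂)/2). -/
open Complex Real

/-- real part of the generalized cross-spectral density factor,
with principal-branch complex powers. -/
theorem stmt_4 (d₁ d₂ : ℝ) (l : ℝ) (hl : l ∈ Set.Ioo 0 Real.pi) :
    (((1 : ℂ) - Complex.exp (-(l : ℂ) * Complex.I)) ^ (-(d₁ : ℂ)) *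
        ((1 : ℂ) - Complex.exp ((l : ℂ) * Complex.I)) ^ (-(d₂ : ℂ))).re
      = (2 * Real.sin (l / 2)) ^ (-(d₁ + d₂)) * Real.cos ((Real.pi - l) * (d₁ - d₂) / 2) := by
  obtain ⟨hl0, hlp⟩ := hl
  set θ : ℝ := (Real.pi - l) / 2 with hθ
  set r : ℝ := 2 * Real.sin (l / 2) with hrdef
  have hsin : 0 < Real.sin (l / 2) :=
    Real.sin_pos_of_pos_of_lt_pi (by linarith) (by linarith [Real.pi_pos])
  have hr : 0 < r := by positivity
  have hθ1 : 0 < θ := by simp only [hθ]; linarith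
  have hθ2 : θ < Real.pi / 2 := by simp only [hθ]; linarith
  have hcosθ : Real.cos θ = Real.sin (l / 2) := by
    rw [hθ, show (Real.pi - l) / 2 = Real.pi / 2 - l / 2 by ring, Real.cos_pi_div_two_sub]
  have hsinθ : Real.sin θ = Real.cos (l / 2) := by
    rw [hθ, show (Real.pi - l) / 2 = Real.pi / 2 - l / 2 by ring, Real.sin_pi_div_two_sub]
  have hrc : r * Real.cos θ = 1 - Real.cos l := by
    rw [hcosθ, hrdef]
    have h1 := Real.cos_sq (l / 2)
    have h2 := Real.sin_sq_add_cos_sq (l / 2)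
    rw [show 2 * (l / 2) = l by ring] at h1
    nlinarith
  have hrs : r * Real.sin θ = Real.sin l := by
    rw [hsinθ, hrdef, show l = 2 * (l / 2) by ring, Real.sin_two_mul]
    ring_nf
  have h1 : (1 : ℂ) - Complex.exp (-(l : ℂ) * Complex.I)
      = Complex.exp ((Real.log r : ℂ) + (θ : ℂ) * Complex.I) := by
    rw [Complex.ext_iff]
    constructor <;>
      simp [Complex.exp_re, Complex.exp_im, Real.exp_log hr, Real.cos_neg, Real.sin_neg] <;>
      linarith [hrc, hrs]
  have h2 : (1 : ℂ) - Complex.exp ((l : ℂ) * Complex.I)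
      = Complex.exp ((Real.log r : ℂ) - (θ : ℂ) * Complex.I) := by
    rw [Complex.ext_iff]
    constructor <;>
      simp [Complex.exp_re, Complex.exp_im, Real.exp_log hr, Real.cos_neg, Real.sin_neg] <;>
      linarith [hrc, hrs]
  have hpi := Real.pi_pos
  have hlog1 : Complex.log ((1 : ℂ) - Complex.exp (-(l : ℂ) * Complex.I))
      = (Real.log r : ℂ) + (θ : ℂ) * Complex.I := by
    rw [h1, Complex.log_exp] <;> simp <;> linarith
  have hlog2 : Complex.log ((1 : ℂ) - Complex.exp ((l : ℂ) * Complex.I))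
      = (Real.log r : ℂ) - (θ : ℂ) * Complex.I := by
    rw [h2, Complex.log_exp] <;> simp <;> linarith
  have hne1 : (1 : ℂ) - Complex.exp (-(l : ℂ) * Complex.I) ≠ 0 := by
    rw [h1]; exact Complex.exp_ne_zero _
  have hne2 : (1 : ℂ) - Complex.exp ((l : ℂ) * Complex.I) ≠ 0 := by
    rw [h2]; exact Complex.exp_ne_zero _
  rw [Complex.cpow_def_of_ne_zero hne1, Complex.cpow_def_of_ne_zero hne2, hlog1, hlog2,
    ← Complex.exp_add]
  have : ((Real.log r : ℂ) + (θ : ℂ) * Complex.I) * (-(d₁ : ℂ))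
      + ((Real.log r : ℂ) - (θ : ℂ) * Complex.I) * (-(d₂ : ℂ))
      = ((-(d₁ + d₂) * Real.log r : ℝ) : ℂ) + (((d₂ - d₁) * θ : ℝ) : ℂ) * Complex.I := by
    push_cast; ring
  rw [this]
  rw [Complex.exp_re]
  simp only [Complex.add_re, Complex.ofReal_re, Complex.mul_re, Complex.I_re, Complex.I_im,
    Complex.ofReal_im, Complex.add_im, Complex.mul_im]
  rw [Real.rpow_def_of_pos hr]
  ring_nf
  congr 1
  rw [← Real.cos_neg]
  ring_nf
  rw [hθ]
  ring_nf
end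

section
/- For every fixed natural number u, the quantity (1/κ_L) · Σ_{i=0}^{L−u} ( 2^{−i} / (2 − 2^{−L}) ) · (i − η_L) · (i + u − η_L) converges to 1 as L → ∞. -/
/-- `η_L = (Σ_{i=0}^{L} i 2^{−i}) / (2 − 2^{−L})`. -/
noncomputable def eta (L : ℕ) : ℝ :=
  (∑ i ∈ Finset.range (L + 1), (i : ℝ) * (2:ℝ) ^ (-(i:ℤ))) / (2 - (2:ℝ) ^ (-(L:ℤ)))

/-- `κ_L = (Σ_{i=0}^{L} (i − η_L)² 2^{−i}) / (2 − 2^{−L})`. -/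
noncomputable def kappa (L : ℕ) : ℝ :=
  (∑ i ∈ Finset.range (L + 1), ((i : ℝ) - eta L) ^ 2 * (2:ℝ) ^ (-(i:ℤ))) /
    (2 - (2:ℝ) ^ (-(L:ℤ)))

open Filter Finset

noncomputable def s0 (n : ℕ) : ℝ := ∑ i ∈ range n, (2:ℝ) ^ (-(i:ℤ))
noncomputable def s1 (n : ℕ) : ℝ := ∑ i ∈ range n, (i:ℝ) * (2:ℝ) ^ (-(i:ℤ))
noncomputable def s2 (n : ℕ) : ℝ := ∑ i ∈ range n, (i:ℝ)^2 * (2:ℝ) ^ (-(i:ℤ))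

lemma pow_eq (i : ℕ) : (2:ℝ) ^ (-(i:ℤ)) = (2⁻¹:ℝ) ^ i := by
  rw [zpow_neg, ← inv_zpow, zpow_natCast]

lemma half_lt : ‖(2⁻¹:ℝ)‖ < 1 := by norm_num [Real.norm_eq_abs]

lemma s0_lim : Tendsto s0 atTop (nhds 2) := by
  have h := (hasSum_geometric_of_norm_lt_one (ξ := (2⁻¹:ℝ)) half_lt).tendsto_sum_nat
  rw [show (1 - (2⁻¹:ℝ))⁻¹ = 2 by norm_num] at h
  exact h.congr fun n => (Finset.sum_congr rfl fun i _ => (pow_eq i).symm)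

lemma s1_lim : Tendsto s1 atTop (nhds 2) := by
  have h := (hasSum_coe_mul_geometric_of_norm_lt_one (r := (2⁻¹:ℝ)) half_lt).tendsto_sum_nat
  rw [show (2⁻¹:ℝ) / (1 - 2⁻¹)^2 = 2 by norm_num] at h
  exact h.congr fun n => (Finset.sum_congr rfl fun i _ => by rw [pow_eq])

lemma s2_hasSum : HasSum (fun n : ℕ => (n:ℝ)^2 * (2⁻¹:ℝ)^n) 6 := by
  have h1 := hasSum_choose_mul_geometric_of_norm_lt_one (𝕜 := ℝ) 2 half_lt
  have h2 := hasSum_coe_mul_geometric_of_norm_lt_one (r := (2⁻¹:ℝ)) half_lt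
  have h3 := hasSum_geometric_of_norm_lt_one (ξ := (2⁻¹:ℝ)) half_lt
  have h := ((h1.mul_left 2).sub (h2.mul_left 3)).sub (h3.mul_left 2)
  rw [show (2 * (1 / (1 - (2⁻¹:ℝ)) ^ (2 + 1)) - 3 * ((2⁻¹:ℝ) / (1 - 2⁻¹)^2))
      - 2 * (1 - (2⁻¹:ℝ))⁻¹ = 6 by norm_num] at h
  have e : (fun n : ℕ => (n:ℝ)^2 * (2⁻¹:ℝ)^n) =
      fun n : ℕ => 2 * (((n+2).choose 2 : ℝ) * (2⁻¹:ℝ)^n) - 3 * ((n:ℝ) * (2⁻¹:ℝ)^n)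
        - 2 * (2⁻¹:ℝ)^n := by
    funext n
    have hdvd : 2 ∣ (n+2)*(n+1) := by
      rw [Nat.mul_comm]; exact (Nat.even_mul_succ_self (n+1)).two_dvd
    have hnat : ((n+2).choose 2) * 2 = (n+2)*(n+1) := by
      rw [Nat.choose_two_right]
      exact Nat.div_mul_cancel hdvd
    have hc : ((n+2).choose 2 : ℝ) * 2 = ((n:ℝ)+2)*((n:ℝ)+1) := by exact_mod_cast hnat
    linear_combination (-(2⁻¹:ℝ)^n) * hc
  rw [e]; exact h

lemma s2_lim : Tendsto s2 atTop (nhds 6) := by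
  have h := s2_hasSum.tendsto_sum_nat
  exact h.congr fun n => (Finset.sum_congr rfl fun i _ => by rw [pow_eq])

lemma D_lim : Tendsto (fun L : ℕ => 2 - (2:ℝ) ^ (-(L:ℤ))) atTop (nhds 2) := by
  have h : Tendsto (fun L : ℕ => (2:ℝ) ^ (-(L:ℤ))) atTop (nhds 0) := by
    have := tendsto_pow_atTop_nhds_zero_of_norm_lt_one half_lt
    exact this.congr fun n => (pow_eq n).symm
  have := (tendsto_const_nhds (x := (2:ℝ)) (f := atTop)).sub h
  simpa using this

lemma hsucc : Tendsto (fun L : ℕ => L + 1) atTop atTop := tendsto_add_atTop_nat 1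

lemma eta_lim : Tendsto eta atTop (nhds 1) := by
  have h := (s1_lim.comp hsucc).div D_lim (by norm_num)
  rw [show (2:ℝ)/2 = 1 by norm_num] at h
  exact h.congr fun L => rfl

lemma kappa_eq (L : ℕ) :
    kappa L = (s2 (L+1) - 2 * eta L * s1 (L+1) + (eta L)^2 * s0 (L+1)) /
      (2 - (2:ℝ) ^ (-(L:ℤ))) := by
  unfold kappa s0 s1 s2
  congr 1
  rw [Finset.mul_sum, Finset.mul_sum, ← Finset.sum_sub_distrib, ← Finset.sum_add_distrib]
  exact Finset.sum_congr rfl fun i _ => by ring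

lemma kappa_lim : Tendsto kappa atTop (nhds 2) := by
  have hn : Tendsto (fun L : ℕ => s2 (L+1) - 2 * eta L * s1 (L+1) + (eta L)^2 * s0 (L+1))
      atTop (nhds 4) := by
    have h := ((s2_lim.comp hsucc).sub
      ((eta_lim.const_mul 2).mul (s1_lim.comp hsucc))).add
      ((eta_lim.pow 2).mul (s0_lim.comp hsucc))
    rw [show (6:ℝ) - 2*1*2 + 1^2*2 = 4 by norm_num] at h
    exact h.congr fun L => rfl
  have h := hn.div D_lim (by norm_num)
  rw [show (4:ℝ)/2 = 2 by norm_num] at h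
  exact (Filter.tendsto_congr kappa_eq).mpr (h.congr fun L => rfl)


/-- for fixed `u`,
`(1/κ_L) Σ_{i=0}^{L−u} (2^{−i}/(2−2^{−L})) (i − η_L)(i + u − η_L) → 1` as `L → ∞`. -/
theorem stmt_11 (u : ℕ) :
    Filter.Tendsto (fun L : ℕ =>
        (1 / kappa L) * ∑ i ∈ Finset.range (L - u + 1),
          ((2:ℝ) ^ (-(i:ℤ)) / (2 - (2:ℝ) ^ (-(L:ℤ)))) * ((i : ℝ) - eta L) *
            ((i : ℝ) + u - eta L))
      Filter.atTop (nhds 1) := by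
  have key : ∀ L : ℕ,
      (∑ i ∈ Finset.range (L - u + 1),
          ((2:ℝ) ^ (-(i:ℤ)) / (2 - (2:ℝ) ^ (-(L:ℤ)))) * ((i : ℝ) - eta L) *
            ((i : ℝ) + u - eta L)) =
      (s2 (L-u+1) + ((u:ℝ) - 2*eta L) * s1 (L-u+1) + ((eta L)^2 - u * eta L) * s0 (L-u+1)) /
        (2 - (2:ℝ) ^ (-(L:ℤ))) := by
    intro L
    unfold s0 s1 s2
    rw [Finset.mul_sum, Finset.mul_sum, ← Finset.sum_add_distrib, ← Finset.sum_add_distrib,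
      Finset.sum_div]
    exact Finset.sum_congr rfl fun i _ => by ring
  simp only [key, one_div]
  have hsub : Tendsto (fun L : ℕ => L - u + 1) atTop atTop :=
    (tendsto_add_atTop_nat 1).comp (tendsto_sub_atTop_nat u)
  have hN : Tendsto (fun L : ℕ =>
      s2 (L-u+1) + ((u:ℝ) - 2*eta L) * s1 (L-u+1) + ((eta L)^2 - u * eta L) * s0 (L-u+1))
      atTop (nhds 4) := by
    have h := ((s2_lim.comp hsub).add
      (((tendsto_const_nhds (x := (u:ℝ))).sub (eta_lim.const_mul 2)).mul
        (s1_lim.comp hsub))).add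
      (((eta_lim.pow 2).sub (eta_lim.const_mul (u:ℝ))).mul (s0_lim.comp hsub))
    rw [show (6:ℝ) + ((u:ℝ) - 2*1)*2 + (1^2 - (u:ℝ)*1)*2 = 4 by ring] at h
    exact h.congr fun L => rfl
  have hK : Tendsto (fun L : ℕ => (kappa L)⁻¹) atTop (nhds (2⁻¹:ℝ)) :=
    kappa_lim.inv₀ (by norm_num)
  have hH := hN.div D_lim (by norm_num : (2:ℝ) ≠ 0)
  have h := hK.mul (hH.congr fun L => rfl)
  rw [show (2⁻¹:ℝ) * (4/2) = 1 by norm_num] at h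
  exact h
end
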